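/- Let λ : ℕ → ℂ with ∑_n ‖λ_n‖ < ∞. Then for every integer k ≥ 1 the Newton identity p_k = (−1)^{k−1} k e_k + ∑_{i=1}^{k−1} (−1)^{k−1+i} e_{k−i} p_i holds. -/

import Mathlib

/-!
For a finite family, Newton's identity is the evaluation of the polynomial identity
`MvPolynomial.psum_eq_mul_esymm_sub_sum`. Apply it to the truncations `λ₀, …, λ_{N-1}`: the power
sums over `range N` tend to `p_k`, and the sums over the `k`-subsets of `range N` tend to `e_k`,
because `S ↦ ∏_{i ∈ S} λ_i` is summable over all finite sets `S` (its norm sums are bounded by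
`∏ (1 + ‖λ_i‖) ≤ exp (∑ ‖λ_i‖)`). Letting `N → ∞` gives the identity.
-/

open Finset Filter Topology

theorem neg_one_pow_sub_add {M : Type*} [Monoid M] [HasDistribNeg M] {i k : ℕ} (hi : 1 ≤ i)
    (hik : i ≤ k) : (-1 : M) ^ (k - 1 + i) = -(-1) ^ (k - i) := by
  rw [show k - 1 + i = k - i + (2 * (i - 1) + 1) by omega, pow_add,
    (odd_two_mul_add_one _).neg_one_pow, mul_neg_one]

section Newton

variable {R ι : Type*} [CommRing R]

open MvPolynomial

theorem aeval_esymm_subtype (s : Finset ι) (f : ι → R) (n : ℕ) :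
    aeval (fun i : s => f i) (esymm s R n) = ∑ S ∈ s.powersetCard n, ∏ i ∈ S, f i := by
  rw [aeval_esymm_eq_multiset_esymm, ← Finset.esymm_map_val, univ_eq_attach, attach_val]
  exact congrArg (Multiset.esymm · n) (Multiset.attach_map_val' _ _)

theorem aeval_psum_subtype (s : Finset ι) (f : ι → R) (n : ℕ) :
    aeval (fun i : s => f i) (psum s R n) = ∑ i ∈ s, f i ^ n := by
  simp only [psum, map_sum, map_pow, aeval_X]
  exact sum_coe_sort s (f · ^ n)

theorem newton_identity_finset (s : Finset ι) (f : ι → R) {k : ℕ} (hk : 1 ≤ k) :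
    ∑ n ∈ s, f n ^ k =
      (-1) ^ (k - 1) * k * ∑ S ∈ s.powersetCard k, ∏ i ∈ S, f i +
        ∑ i ∈ Icc 1 (k - 1), (-1) ^ (k - 1 + i) *
          (∑ S ∈ s.powersetCard (k - i), ∏ j ∈ S, f j) * ∑ n ∈ s, f n ^ i := by
  have h := congrArg (aeval fun i : s => f i) (psum_eq_mul_esymm_sub_sum s R k hk)
  simp only [map_sub, map_mul, map_sum, map_pow, map_neg, map_one, map_natCast,
    aeval_esymm_subtype, aeval_psum_subtype] at h
  rw [h, sub_eq_add_neg, ← sum_neg_distrib, show k + 1 = k - 1 + 2 by omega, pow_add,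
    neg_one_sq, mul_one]
  congr 1
  refine sum_nbij' (fun a => a.2) (fun i => (k - i, i)) ?_ ?_ ?_ ?_ ?_ <;>
    simp only [mem_filter, HasAntidiagonal.mem_antidiagonal, Set.mem_Ioo, mem_Icc, Prod.forall,
      Prod.mk.injEq, and_true]
  · rintro a b ⟨hab, ha, hak⟩
    omega
  · intro i hi
    omega
  · rintro a b ⟨hab, -⟩
    omega
  · exact fun _ _ => trivial
  · rintro a b ⟨rfl, -, hlt⟩
    rw [neg_one_pow_sub_add (by omega) (by omega), Nat.add_sub_cancel]
    ring

end Newton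

theorem summable_prod_finset_of_nonneg {ι : Type*} {f : ι → ℝ} (hf : Summable f) (hf0 : 0 ≤ f) :
    Summable fun s : Finset ι => ∏ i ∈ s, f i := by
  classical
  have hprod0 : ∀ s : Finset ι, 0 ≤ ∏ i ∈ s, f i := fun s => prod_nonneg fun i _ => hf0 i
  refine summable_of_sum_le (c := Real.exp (∑' i, f i)) hprod0 fun u => ?_
  set t := u.sup id
  calc ∑ s ∈ u, ∏ i ∈ s, f i
      ≤ ∑ s ∈ t.powerset, ∏ i ∈ s, f i :=
        sum_le_sum_of_subset_of_nonneg (fun s hs => mem_powerset.2 (le_sup (f := id) hs))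
          fun s _ _ => hprod0 s
    _ = ∏ i ∈ t, (1 + f i) := (prod_one_add t).symm
    _ ≤ ∏ i ∈ t, Real.exp (f i) :=
        prod_le_prod (fun i _ => add_nonneg zero_le_one (hf0 i)) fun i _ =>
          (add_comm _ _).trans_le (Real.add_one_le_exp (f i))
    _ = Real.exp (∑ i ∈ t, f i) := (Real.exp_sum t f).symm
    _ ≤ Real.exp (∑' i, f i) := Real.exp_le_exp.2 (hf.sum_le_tsum t fun i _ => hf0 i)

section NormedRing

variable {ι R : Type*} [NormedCommRing R] [NormOneClass R] [CompleteSpace R] {f : ι → R}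

theorem summable_prod_finset (hf : Summable fun i => ‖f i‖) :
    Summable fun s : Finset ι => ∏ i ∈ s, f i :=
  (summable_prod_finset_of_nonneg hf fun _ => norm_nonneg _).of_norm_bounded fun s =>
    s.norm_prod_le f

theorem summable_pow_of_summable_norm (hf : Summable fun i => ‖f i‖) {k : ℕ} (hk : 1 ≤ k) :
    Summable fun i => f i ^ k := by
  refine (hf.mul_left ((∑' j, ‖f j‖) ^ (k - 1))).of_norm_bounded fun i => ?_
  calc ‖f i ^ k‖ ≤ ‖f i‖ ^ k := norm_pow_le _ _
    _ = ‖f i‖ ^ (k - 1) * ‖f i‖ := by rw [← pow_succ, Nat.sub_add_cancel hk]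
    _ ≤ (∑' j, ‖f j‖) ^ (k - 1) * ‖f i‖ := by
        gcongr
        exact hf.le_tsum i fun j _ => norm_nonneg _

end NormedRing

theorem tendsto_sum_powersetCard_range {M : Type*} [AddCommMonoid M] [TopologicalSpace M]
    {f : Finset ℕ → M} {k : ℕ} {a : M}
    (h : HasSum (fun S : {S : Finset ℕ // S.card = k} => f S) a) :
    Tendsto (fun N => ∑ S ∈ (range N).powersetCard k, f S) atTop (𝓝 a) := by
  have hpowerset : Tendsto (fun N => (range N).powerset) atTop atTop :=
    tendsto_atTop_finset_of_monotone (fun m n hmn => powerset_mono.2 (range_mono hmn)) fun S =>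
      S.exists_nat_subset_range.imp fun _ => mem_powerset.2
  refine ((hasSum_subtype_iff_indicator (s := {S : Finset ℕ | S.card = k})).1 h |>.comp
    hpowerset).congr fun N => ?_
  rw [Function.comp_apply, sum_indicator_eq_sum_filter, powersetCard_eq_filter]
  rfl

/-- Newton's identities for the power sums and elementary symmetric
sums of an absolutely summable complex sequence. -/
theorem newton_identity_infinite
    (lam : ℕ → ℂ) (hsum : Summable fun n => ‖lam n‖)
    (p : ℕ → ℂ) (hp : ∀ k, 1 ≤ k → p k = ∑' n, lam n ^ k)
    (e : ℕ → ℂ) (he : ∀ k, e k = ∑' S : {S : Finset ℕ // S.card = k}, ∏ i ∈ S.1, lam i) :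
    ∀ k : ℕ, 1 ≤ k →
      p k = (-1 : ℂ) ^ (k - 1) * k * e k +
        ∑ i ∈ Finset.Icc 1 (k - 1), (-1 : ℂ) ^ (k - 1 + i) * e (k - i) * p i := by
  intro k hk
  have hp_lim : ∀ i, 1 ≤ i → Tendsto (fun N => ∑ n ∈ range N, lam n ^ i) atTop (𝓝 (p i)) :=
    fun i hi => hp i hi ▸ (summable_pow_of_summable_norm hsum hi).hasSum.tendsto_sum_nat
  have he_lim : ∀ j, Tendsto (fun N => ∑ S ∈ (range N).powersetCard j, ∏ i ∈ S, lam i) atTop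
      (𝓝 (e j)) := fun j => he j ▸ tendsto_sum_powersetCard_range
        ((summable_prod_finset hsum).comp_injective Subtype.val_injective).hasSum
  refine tendsto_nhds_unique (hp_lim k hk) ?_
  simp_rw [newton_identity_finset _ _ hk]
  exact ((he_lim k).const_mul _).add <| tendsto_finsetSum _ fun i hi =>
    ((he_lim _).const_mul _).mul (hp_lim i (mem_Icc.1 hi).1)
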